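/- arXiv:1604.05668 — 4 statements merged into one kernel-verified Lean document; each statement's English description precedes it below -/
import Mathlib

section
/- Let ϑ be a nonnegative rational number, α a positive irrational real number, and φ a nonnegative real number. Then the set of fractional parts {frac(nα − φ·log₂ n) : n ∈ ℕ, n ≥ 1, ϑ·n ∈ ℕ} is dense in the interval [0,1]. -/
open Real Set

private lemma aux_subgroup_dense {β : ℝ} (hβ : Irrational β) :
    Dense {x : ℝ | ∃ j r : ℤ, x = j * β + r} := by
  let G : AddSubgroup ℝ :=
    { carrier := {x : ℝ | ∃ j r : ℤ, x = j * β + r}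
      zero_mem' := ⟨0, 0, by simp⟩
      add_mem' := by
        rintro a b ⟨j1, r1, rfl⟩ ⟨j2, r2, rfl⟩
        exact ⟨j1 + j2, r1 + r2, by push_cast; ring⟩
      neg_mem' := by
        rintro a ⟨j, r, rfl⟩
        exact ⟨-j, -r, by push_cast; ring⟩ }
  have hd : Dense (G : Set ℝ) := by
    apply AddSubgroup.dense_of_not_isolated_zero
    intro ε hε
    obtain ⟨n, hn⟩ := exists_nat_gt (1 / ε)
    obtain ⟨j, k, hk0, hkn, hjk⟩ := Real.exists_int_int_abs_mul_sub_le β (Nat.succ_pos n)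
    set g : ℝ := (k : ℝ) * β - j with hg
    have hgne : g ≠ 0 := by
      have hirr : Irrational ((k : ℝ) * β) := hβ.intCast_mul (by omega)
      intro h
      exact hirr.ne_int j (by linarith [sub_eq_zero.mp h])
    have hlt : |g| < ε := by
      refine lt_of_le_of_lt hjk ?_
      rw [div_lt_iff₀ (by positivity)]
      have h1 : 1 / ε < (n.succ : ℝ) + 1 := by push_cast; linarith
      calc (1:ℝ) = ε * (1/ε) := by field_simp
      _ < ε * ((n.succ : ℝ) + 1) := mul_lt_mul_of_pos_left h1 hε
    have hmem : g ∈ G := ⟨k, -j, by push_cast; ring⟩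
    rcases lt_or_gt_of_ne hgne with h | h
    · refine ⟨-g, neg_mem hmem, by linarith, ?_⟩
      rw [abs_of_neg h] at hlt; exact hlt
    · exact ⟨g, hmem, h, by rw [abs_of_pos h] at hlt; linarith⟩
  exact hd

private lemma aux_net {β : ℝ} (hβ : Irrational β) {ε : ℝ} (hε : 0 < ε) :
    ∃ M : ℕ, ∀ c : ℝ, ∃ j r : ℤ, |j| ≤ (M : ℤ) ∧ |(j : ℝ) * β + r - c| < ε := by
  have hd := aux_subgroup_dense hβ
  have hcov : Icc (0:ℝ) 1 ⊆ ⋃ p : ℤ × ℤ, Metric.ball ((p.1 : ℝ) * β + p.2) ε := by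
    intro c _
    obtain ⟨y, hy1, hy2⟩ := Metric.dense_iff.mp hd c ε hε
    obtain ⟨j, r, rfl⟩ := hy2
    exact mem_iUnion.mpr ⟨(j, r), by
      simpa [Metric.mem_ball, dist_comm] using hy1⟩
  obtain ⟨t, ht⟩ := isCompact_Icc.elim_finite_subcover _
    (fun p : ℤ × ℤ => Metric.isOpen_ball) hcov
  refine ⟨t.sup fun p => p.1.natAbs, fun c => ?_⟩
  have hc : Int.fract c ∈ Icc (0:ℝ) 1 := ⟨Int.fract_nonneg c, (Int.fract_lt_one c).le⟩
  obtain ⟨p, hpt, hp⟩ := mem_iUnion₂.mp (ht hc)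
  refine ⟨p.1, p.2 + ⌊c⌋, ?_, ?_⟩
  · rw [Int.abs_eq_natAbs]
    exact_mod_cast Finset.le_sup (f := fun p : ℤ × ℤ => p.1.natAbs) hpt
  · have h1 : |(p.1 : ℝ) * β + p.2 - Int.fract c| < ε := by
      simpa [Metric.mem_ball, Real.dist_eq, abs_sub_comm] using hp
    have : (p.1 : ℝ) * β + ((p.2 : ℤ) + ⌊c⌋ : ℤ) - c
        = (p.1 : ℝ) * β + p.2 - Int.fract c := by
      rw [Int.fract]; push_cast; ring
    rw [this]; exact h1

private lemma aux_log {a b : ℝ} (ha : 1 ≤ a) (hab : a ≤ b) :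
    Real.logb 2 b - Real.logb 2 a ≤ (b - a) / (a * Real.log 2) ∧
      0 ≤ Real.logb 2 b - Real.logb 2 a := by
  have ha0 : 0 < a := by linarith
  have hb0 : 0 < b := by linarith
  have hlog2 : 0 < Real.log 2 := Real.log_pos (by norm_num)
  constructor
  · have h1 : Real.log b - Real.log a = Real.log (b / a) :=
      (Real.log_div hb0.ne' ha0.ne').symm
    have h2 : Real.log (b / a) ≤ b / a - 1 :=
      Real.log_le_sub_one_of_pos (by positivity)
    rw [Real.logb, Real.logb, div_sub_div_same, h1]
    have h3 : (b - a) / (a * Real.log 2) = (b / a - 1) / Real.log 2 := by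
      field_simp
    rw [h3]
    gcongr
  · have h4 : Real.log a ≤ Real.log b := Real.log_le_log ha0 hab
    rw [Real.logb, Real.logb, div_sub_div_same]
    apply div_nonneg (by linarith) hlog2.le

theorem dense_fract_irrational_sub_log (ϑ : ℚ) (hϑ : 0 ≤ ϑ)
    (α : ℝ) (hα : Irrational α) (hαpos : 0 < α)
    (φ : ℝ) (hφ : 0 ≤ φ) :
    Set.Icc (0 : ℝ) 1 ⊆
      closure {x : ℝ | ∃ n : ℕ, 1 ≤ n ∧ (∃ m : ℕ, ϑ * (n : ℚ) = (m : ℚ)) ∧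
        x = Int.fract ((n : ℝ) * α - φ * Real.logb 2 (n : ℝ))} := by
  set S := {x : ℝ | ∃ n : ℕ, 1 ≤ n ∧ (∃ m : ℕ, ϑ * (n : ℚ) = (m : ℚ)) ∧
        x = Int.fract ((n : ℝ) * α - φ * Real.logb 2 (n : ℝ))} with hSdef
  have hlog2 : 0 < Real.log 2 := Real.log_pos (by norm_num)
  set q : ℕ := ϑ.den with hqdef
  have hq : 0 < q := ϑ.pos
  have hβ : Irrational ((q : ℝ) * α) := hα.natCast_mul hq.ne'
  set β : ℝ := (q : ℝ) * α with hβdef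
  have key : Ioo (0:ℝ) 1 ⊆ closure S := by
    intro t ht
    rw [Metric.mem_closure_iff]
    intro ε₀ hε₀
    set ε : ℝ := min (ε₀ / 2) (min t (1 - t) / 3) with hεdef
    have hmin : 0 < min t (1 - t) := lt_min ht.1 (by linarith [ht.2])
    have hε : 0 < ε := lt_min (by linarith) (by linarith)
    obtain ⟨M, hM⟩ := aux_net hβ hε
    -- choose a large base index k
    obtain ⟨k, hk⟩ := exists_nat_gt ((M : ℝ) + 1 + φ * M / (ε * Real.log 2))
    have hφM : 0 ≤ φ * M / (ε * Real.log 2) := by positivity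
    have hkM : (M : ℝ) + 1 ≤ (k : ℝ) := by linarith
    have hkMn : M < k := by exact_mod_cast (by linarith : (M : ℝ) < k)
    have hk0 : 0 < k := lt_of_le_of_lt (Nat.zero_le M) hkMn
    -- base point
    set p : ℝ := ((q * k : ℕ) : ℝ) * α - φ * Real.logb 2 ((q * k : ℕ) : ℝ) with hpdef
    obtain ⟨j, r, hjM, hjr⟩ := hM (t - p)
    have hjabs := abs_le.mp hjM
    have hkj : (0 : ℤ) < (k : ℤ) + j := by omega
    set m : ℕ := ((k : ℤ) + j).toNat with hmdef
    have hmk : (m : ℤ) = (k : ℤ) + j := Int.toNat_of_nonneg hkj.le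
    have hm1 : 1 ≤ m := by omega
    have hmr : (m : ℝ) = (k : ℝ) + (j : ℝ) := by exact_mod_cast hmk
    have hjabsR : |(j : ℝ)| ≤ (M : ℝ) := by exact_mod_cast hjM
    have hjabsR' := abs_le.mp hjabsR
    set n : ℕ := q * m with hndef
    set v : ℝ := ((n : ℕ) : ℝ) * α - φ * Real.logb 2 ((n : ℕ) : ℝ) with hvdef
    -- algebraic identity
    have hq0 : (0:ℝ) < q := by exact_mod_cast hq
    have hm0 : (0:ℝ) < m := by exact_mod_cast hm1
    have hk0' : (0:ℝ) < k := by exact_mod_cast hk0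
    have hveq : v = p + (j : ℝ) * β - φ * (Real.logb 2 (m : ℝ) - Real.logb 2 (k : ℝ)) := by
      have h1 : ((n : ℕ) : ℝ) = (q : ℝ) * (m : ℝ) := Nat.cast_mul q m
      have h2 : ((q * k : ℕ) : ℝ) = (q : ℝ) * (k : ℝ) := Nat.cast_mul q k
      rw [hvdef, hpdef, h1, h2, Real.logb_mul hq0.ne' hm0.ne',
        Real.logb_mul hq0.ne' hk0'.ne', hβdef, hmr]
      ring
    -- drift bound
    have hkMr : (1:ℝ) ≤ (k : ℝ) - M := by linarith
    have hdrift : |Real.logb 2 (m : ℝ) - Real.logb 2 (k : ℝ)| ≤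
        (M : ℝ) / (((k : ℝ) - M) * Real.log 2) := by
      have hden : 0 < ((k : ℝ) - M) * Real.log 2 := by
        apply mul_pos (by linarith) hlog2
      rcases le_total (m : ℝ) (k : ℝ) with h | h
      · have hm1' : (1:ℝ) ≤ (m : ℝ) := by exact_mod_cast hm1
        obtain ⟨hub, hnn⟩ := aux_log hm1' h
        rw [abs_of_nonpos (by linarith)]
        have hb : (k : ℝ) - (m : ℝ) ≤ (M : ℝ) := by
          rw [hmr]; linarith
        have hma : ((k : ℝ) - M) ≤ (m : ℝ) := by rw [hmr]; linarith
        calc -(Real.logb 2 (m:ℝ) - Real.logb 2 (k:ℝ))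
            = Real.logb 2 (k:ℝ) - Real.logb 2 (m:ℝ) := by ring
          _ ≤ ((k:ℝ) - m) / ((m : ℝ) * Real.log 2) := hub
          _ ≤ (M : ℝ) / (((k : ℝ) - M) * Real.log 2) :=
              div_le_div₀ (by positivity) hb hden
                (mul_le_mul_of_nonneg_right hma hlog2.le)
      · obtain ⟨hub, hnn⟩ := aux_log (by linarith : (1:ℝ) ≤ (k:ℝ)) h
        rw [abs_of_nonneg (by linarith)]
        have hb : (m : ℝ) - (k : ℝ) ≤ (M : ℝ) := by rw [hmr]; linarith
        calc Real.logb 2 (m:ℝ) - Real.logb 2 (k:ℝ)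
            ≤ ((m:ℝ) - k) / ((k : ℝ) * Real.log 2) := hub
          _ ≤ (M : ℝ) / (((k : ℝ) - M) * Real.log 2) :=
              div_le_div₀ (by positivity) hb hden
                (mul_le_mul_of_nonneg_right (by linarith) hlog2.le)
    have hdrift2 : |φ * (Real.logb 2 (m : ℝ) - Real.logb 2 (k : ℝ))| ≤ ε := by
      rw [abs_mul, abs_of_nonneg hφ]
      have h1 : φ * |Real.logb 2 (m:ℝ) - Real.logb 2 (k:ℝ)| ≤
          φ * ((M : ℝ) / (((k : ℝ) - M) * Real.log 2)) :=
        mul_le_mul_of_nonneg_left hdrift hφ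
      refine h1.trans ?_
      have hkk : 0 < ((k:ℝ) - M) * Real.log 2 := mul_pos (by linarith) hlog2
      rw [mul_div_assoc', div_le_iff₀ hkk]
      have h3 : φ * (M:ℝ) / (ε * Real.log 2) ≤ (k : ℝ) - M - 1 := by linarith
      have h4 : φ * (M:ℝ) ≤ ((k:ℝ) - M - 1) * (ε * Real.log 2) := by
        rw [div_le_iff₀ (mul_pos hε hlog2)] at h3; linarith
      calc φ * (M:ℝ) ≤ ((k:ℝ) - M - 1) * (ε * Real.log 2) := h4
        _ ≤ ((k:ℝ) - M) * (ε * Real.log 2) := by nlinarith [mul_pos hε hlog2]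
        _ = ε * (((k:ℝ) - M) * Real.log 2) := by ring
    -- combine
    have hclose : |v + (r : ℝ) - t| < 2 * ε := by
      have h1 : v + r - t = ((j:ℝ) * β + r - (t - p))
          - φ * (Real.logb 2 (m:ℝ) - Real.logb 2 (k:ℝ)) := by rw [hveq]; ring
      calc |v + r - t| ≤ |(j:ℝ) * β + r - (t - p)| +
            |φ * (Real.logb 2 (m:ℝ) - Real.logb 2 (k:ℝ))| := by
              rw [h1]; exact abs_sub _ _
        _ < ε + ε := by
            have := hjr; have := hdrift2
            apply add_lt_add_of_lt_of_le hjr hdrift2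
        _ = 2 * ε := by ring
    have h2ε : 2 * ε < min t (1 - t) := by
      have : ε ≤ min t (1 - t) / 3 := min_le_right _ _
      linarith
    have habs := abs_lt.mp hclose
    have hv0 : 0 ≤ v + r := by
      have : min t (1 - t) ≤ t := min_le_left _ _
      linarith
    have hv1 : v + r < 1 := by
      have : min t (1 - t) ≤ 1 - t := min_le_right _ _
      linarith
    have hfract : Int.fract v = v + r := by
      rw [← Int.fract_add_intCast v r]
      exact Int.fract_eq_self.mpr ⟨hv0, hv1⟩
    refine ⟨Int.fract v, ?_, ?_⟩
    · refine ⟨n, ?_, ⟨ϑ.num.toNat * m, ?_⟩, rfl⟩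
      · exact Nat.one_le_iff_ne_zero.mpr (by positivity)
      · rw [hndef]
        push_cast
        have hnn : ((ϑ.num.toNat : ℚ)) = ((ϑ.num : ℤ) : ℚ) := by
          norm_cast
          exact Int.toNat_of_nonneg (Rat.num_nonneg.mpr hϑ)
        rw [hnn]
        have hnum : ϑ * (q : ℚ) = ((ϑ.num : ℤ) : ℚ) := Rat.mul_den_eq_num ϑ
        linear_combination (m : ℚ) * hnum
    · rw [hfract, Real.dist_eq]
      have : |t - (v + r)| = |v + r - t| := abs_sub_comm _ _
      rw [this]
      have hεhalf : ε ≤ ε₀ / 2 := min_le_left _ _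
      linarith
  intro x hx
  have h2 := closure_mono key
  rw [closure_closure] at h2
  apply h2
  rw [closure_Ioo (by norm_num : (0:ℝ) ≠ 1)]
  exact hx
end

section
/- Let β ∈ (0,1) be rational with binary entropy H(β) irrational. Then the set of fractional parts {frac(log₂ C(n, βn)) : n ∈ ℕ, n ≥ 1, βn ∈ ℕ} is dense in [0,1], where C(n, βn) is the binomial coefficient n choose βn. -/
open Filter Topology Nat

/-- The binary entropy function (base-2 logarithm). -/
noncomputable def binEnt (x : ℝ) : ℝ :=
  -(x * Real.logb 2 x) - (1 - x) * Real.logb 2 (1 - x)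

/-- First-crossing lemma: a sequence with increments in [δ1,δ2], δ1>0, hits every window [t,t+δ2). -/
lemma crossing_aux (c : ℕ → ℝ) (δ1 δ2 t : ℝ) (h1 : 0 < δ1)
    (hstep : ∀ j, δ1 ≤ c (j+1) - c j ∧ c (j+1) - c j ≤ δ2)
    (ht : c 0 ≤ t) : ∃ j, t ≤ c j ∧ c j < t + δ2 := by
  have h12 : δ1 ≤ δ2 := le_trans (hstep 0).1 (hstep 0).2
  have hgrow : ∀ j : ℕ, c 0 + j * δ1 ≤ c j := by
    intro j
    induction j with
    | zero => simp
    | succ n ih =>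
      have := (hstep n).1
      push_cast
      push_cast at ih
      linarith
  have hex : ∃ j : ℕ, t ≤ c j := by
    obtain ⟨j, hj⟩ := exists_nat_ge ((t - c 0) / δ1)
    refine ⟨j, ?_⟩
    have h2 : t - c 0 ≤ j * δ1 := by
      rw [div_le_iff₀ h1] at hj; linarith
    have := hgrow j
    linarith
  classical
  have hj : t ≤ c (Nat.find hex) := Nat.find_spec hex
  refine ⟨Nat.find hex, hj, ?_⟩
  rcases Nat.eq_zero_or_pos (Nat.find hex) with h0 | h0
  · rw [h0] at hj ⊢
    have : c 0 = t := le_antisymm ht hj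
    linarith
  · obtain ⟨i, hi⟩ : ∃ i, Nat.find hex = i + 1 := ⟨Nat.find hex - 1, by omega⟩
    have hlt : ¬ t ≤ c i := Nat.find_min hex (by omega)
    push_neg at hlt
    have := (hstep i).2
    rw [hi]
    linarith

/-- For irrational α and ε>0 there are q ≥ 1, p with 0 < qα - p < ε. -/
lemma exists_small_pos (α : ℝ) (hα : Irrational α) (ε : ℝ) (hε : 0 < ε) :
    ∃ (q : ℕ) (p : ℤ), 1 ≤ q ∧ 0 < (q : ℝ) * α - p ∧ (q : ℝ) * α - p < ε := by
  have hirr : ∀ (q : ℕ) (p : ℤ), 1 ≤ q → ((q : ℝ) * α - p) ≠ 0 := by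
    intro q p hq
    have h : Irrational ((q : ℝ) * α - p) := (hα.natCast_mul (m := q) (by omega)).sub_intCast p
    simpa using h.ne_int 0
  obtain ⟨n, hn⟩ := exists_nat_gt (1 / ε)
  have hn0 : 0 < n := by
    have h1 : (0:ℝ) < 1/ε := by positivity
    have : (0:ℝ) < n := lt_trans h1 hn
    exact_mod_cast this
  obtain ⟨j, k, hk0, hkn, hjk⟩ := Real.exists_int_int_abs_mul_sub_le α hn0
  set δ : ℝ := (k : ℝ) * α - j with hδdef
  have hnR : (0:ℝ) < n := by exact_mod_cast hn0
  have hδe : |δ| < ε := by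
    have h2 : (1:ℝ) / (n + 1) < ε := by
      rw [div_lt_iff₀ (by linarith)]
      have : 1 < n * ε := by
        rw [div_lt_iff₀ hε] at hn; linarith
      nlinarith
    exact lt_of_le_of_lt hjk h2
  have hδsmall : |δ| ≤ 1/2 := by
    have : (1:ℝ)/(n+1) ≤ 1/2 := by
      apply div_le_div_of_nonneg_left (by norm_num) (by norm_num)
      have : (1:ℝ) ≤ n := by exact_mod_cast hn0
      linarith
    linarith [hjk]
  have hkq : ((k.toNat : ℕ) : ℝ) = (k : ℝ) := by
    exact_mod_cast Int.toNat_of_nonneg hk0.le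
  have hk1 : 1 ≤ k.toNat := by omega
  have hδ0 : δ ≠ 0 := by
    have := hirr k.toNat j hk1
    rwa [hkq] at this
  rcases hδ0.lt_or_gt with hneg | hpos
  · -- δ < 0 : use m = ⌊1/(-δ)⌋ multiples
    have hmd : (0:ℝ) < -δ := by linarith
    have hinv : (2:ℝ) ≤ 1 / (-δ) := by
      rw [le_div_iff₀ hmd]
      have : -δ ≤ 1/2 := by rw [abs_of_neg hneg] at hδsmall; linarith
      linarith
    set M : ℤ := ⌊(1:ℝ) / (-δ)⌋ with hM
    have hM2 : (2:ℤ) ≤ M := Int.le_floor.mpr (by push_cast; linarith)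
    set m : ℕ := M.toNat with hm
    have hmM : ((m : ℕ) : ℝ) = (M : ℝ) := by exact_mod_cast Int.toNat_of_nonneg (by omega)
    have hmle : (m : ℝ) ≤ 1 / (-δ) := by rw [hmM]; exact Int.floor_le _
    have hmgt : 1 / (-δ) < (m : ℝ) + 1 := by rw [hmM]; exact Int.lt_floor_add_one _
    have hq1 : 1 ≤ m * k.toNat := by
      have : 1 ≤ m := by omega
      exact Nat.one_le_iff_ne_zero.mpr (by positivity)
    refine ⟨m * k.toNat, m * j - 1, hq1, ?_, ?_⟩
    all_goals
      have hval : ((m * k.toNat : ℕ) : ℝ) * α - ((m * j - 1 : ℤ) : ℝ) = m * δ + 1 := by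
        push_cast [hδdef]
        rw [show (((k.toNat : ℕ)) : ℝ) = (k : ℝ) from hkq]
        ring
      rw [hval]
    · have hge : 0 ≤ (m:ℝ) * δ + 1 := by
        have h5 : (m:ℝ) * (-δ) ≤ 1 := by
          rw [← le_div_iff₀ hmd]; exact hmle
        linarith
      have hne : (m:ℝ) * δ + 1 ≠ 0 := by
        have := hirr (m * k.toNat) (m * j - 1) hq1
        rw [hval] at this; exact this
      exact lt_of_le_of_ne hge (Ne.symm hne)
    · have h6 : 1 < ((m:ℝ) + 1) * (-δ) := by
        rw [← div_lt_iff₀ hmd]; exact hmgt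
      have h7 : -δ < ε := by rw [abs_of_neg hneg] at hδe; linarith
      nlinarith
  · refine ⟨k.toNat, j, hk1, ?_, ?_⟩ <;> rw [hkq]
    · exact hpos
    · calc (k:ℝ) * α - j ≤ |δ| := le_abs_self δ
        _ < ε := hδe

/-- Stirling: log n! in explicit form. -/
lemma log_factorial_eq (n : ℕ) (hn : 1 ≤ n) :
    Real.log (n !) = Real.log (Stirling.stirlingSeq n)
      + 1/2 * Real.log (2 * n) + n * Real.log n - n := by
  have h := Stirling.log_stirlingSeq_formula n
  have hn0 : (0:ℝ) < n := by exact_mod_cast hn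
  rw [Real.log_div hn0.ne' (Real.exp_ne_zero 1), Real.log_exp] at h
  have : (n:ℝ) * (Real.log n - 1) = n * Real.log n - n := by ring
  linarith [h, this]

lemma log_choose_eq (k a b : ℕ) :
    Real.log (((k*(a+b)).choose (k*a) : ℕ))
      = Real.log ((k*(a+b))!) - Real.log ((k*a)!) - Real.log ((k*b)!) := by
  have hle : k*a ≤ k*(a+b) := Nat.mul_le_mul_left k (Nat.le_add_right a b)
  have hsub : k*(a+b) - k*a = k*b := by
    rw [Nat.mul_add]; omega
  have h := Nat.choose_mul_factorial_mul_factorial hle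
  rw [hsub] at h
  have hc : (0:ℝ) < ((k*(a+b)).choose (k*a) : ℕ) := by
    exact_mod_cast Nat.choose_pos hle
  have hf1 : (0:ℝ) < ((k*a)! : ℕ) := by exact_mod_cast Nat.factorial_pos _
  have hf2 : (0:ℝ) < ((k*b)! : ℕ) := by exact_mod_cast Nat.factorial_pos _
  have hcast : (((k*(a+b))! : ℕ) : ℝ)
      = ((k*(a+b)).choose (k*a) : ℕ) * ((k*a)! : ℕ) * ((k*b)! : ℕ) := by
    exact_mod_cast congrArg (Nat.cast (R := ℝ)) h.symm
  rw [hcast, Real.log_mul (by positivity) hf2.ne', Real.log_mul hc.ne' hf1.ne']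
  ring

/-- The big algebraic identity after Stirling substitution. -/
lemma G_formula (a b k : ℕ) (ha : 1 ≤ a) (hb : 1 ≤ b) (hk : 1 ≤ k) :
    Real.log (((k*(a+b)).choose (k*a) : ℕ))
      = (Real.log (Stirling.stirlingSeq (k*(a+b))) - Real.log (Stirling.stirlingSeq (k*a))
        - Real.log (Stirling.stirlingSeq (k*b)))
        + (k:ℝ) * (((a:ℝ)+b) * Real.log ((a:ℝ)+b) - a * Real.log a - b * Real.log b)
        - (1/2) * Real.log k
        + (1/2) * (Real.log ((a:ℝ)+b) - Real.log a - Real.log b - Real.log 2) := by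
  have h1 : 1 ≤ k*(a+b) := Nat.one_le_iff_ne_zero.mpr (by positivity)
  have h2 : 1 ≤ k*a := Nat.one_le_iff_ne_zero.mpr (by positivity)
  have h3 : 1 ≤ k*b := Nat.one_le_iff_ne_zero.mpr (by positivity)
  rw [log_choose_eq, log_factorial_eq _ h1, log_factorial_eq _ h2, log_factorial_eq _ h3]
  have hA : (0:ℝ) < a := by exact_mod_cast ha
  have hB : (0:ℝ) < b := by exact_mod_cast hb
  have hK : (0:ℝ) < k := by exact_mod_cast hk
  have hAB : (0:ℝ) < (a:ℝ) + b := by linarith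
  push_cast
  have e1 : Real.log ((k:ℝ)*((a:ℝ)+b)) = Real.log k + Real.log ((a:ℝ)+b) :=
    Real.log_mul hK.ne' hAB.ne'
  have e2 : Real.log ((k:ℝ)*(a:ℝ)) = Real.log k + Real.log a := Real.log_mul hK.ne' hA.ne'
  have e3 : Real.log ((k:ℝ)*(b:ℝ)) = Real.log k + Real.log b := Real.log_mul hK.ne' hB.ne'
  have f1 : Real.log (2*((k:ℝ)*((a:ℝ)+b))) = Real.log 2 + (Real.log k + Real.log ((a:ℝ)+b)) := by
    rw [Real.log_mul (by norm_num) (by positivity), e1]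
  have f2 : Real.log (2*((k:ℝ)*(a:ℝ))) = Real.log 2 + (Real.log k + Real.log a) := by
    rw [Real.log_mul (by norm_num) (by positivity), e2]
  have f3 : Real.log (2*((k:ℝ)*(b:ℝ))) = Real.log 2 + (Real.log k + Real.log b) := by
    rw [Real.log_mul (by norm_num) (by positivity), e3]
  rw [f1, f2, f3, e1, e2, e3]
  ring

/-- Entropy identity. -/
lemma binEnt_formula (a b : ℝ) (hA : 0 < a) (hB : 0 < b) :
    (a+b) * Real.log (a+b) - a * Real.log a - b * Real.log b
      = Real.log 2 * ((a+b) * binEnt (a / (a+b))) := by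
  have hAB : 0 < a + b := by linarith
  have h1 : 1 - a/(a+b) = b/(a+b) := by field_simp; ring
  have hlog2 : Real.log 2 ≠ 0 := (Real.log_pos (by norm_num)).ne'
  unfold binEnt
  rw [h1, Real.logb, Real.logb, Real.log_div hA.ne' hAB.ne', Real.log_div hB.ne' hAB.ne']
  field_simp
  ring

lemma tendsto_log_stirling_mul (m : ℕ) (hm : 1 ≤ m) :
    Tendsto (fun k : ℕ => Real.log (Stirling.stirlingSeq (k*m))) atTop
      (𝓝 (Real.log (Real.sqrt Real.pi))) := by
  have h1 : Tendsto (fun k : ℕ => k * m) atTop atTop :=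
    tendsto_atTop_mono (fun k => Nat.le_mul_of_pos_right k (by omega)) tendsto_id
  have h3 : ContinuousAt Real.log (Real.sqrt Real.pi) :=
    Real.continuousAt_log (Real.sqrt_pos.mpr Real.pi_pos).ne'
  exact (h3.tendsto.comp Stirling.tendsto_stirlingSeq_sqrt_pi).comp h1

lemma tendsto_Gdiff (a b : ℕ) (ha : 1 ≤ a) (hb : 1 ≤ b) (q : ℕ) :
    Tendsto (fun k : ℕ => Real.log ((((k+q)*(a+b)).choose ((k+q)*a) : ℕ))
      - Real.log (((k*(a+b)).choose (k*a) : ℕ))) atTop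
      (𝓝 ((q:ℝ) * (((a:ℝ)+b) * Real.log ((a:ℝ)+b) - a*Real.log a - b*Real.log b))) := by
  set E : ℝ := ((a:ℝ)+b) * Real.log ((a:ℝ)+b) - a*Real.log a - b*Real.log b with hE
  set c1 : ℝ := (1/2) * (Real.log ((a:ℝ)+b) - Real.log a - Real.log b - Real.log 2) with hc1
  set G : ℕ → ℝ := fun k => Real.log (((k*(a+b)).choose (k*a) : ℕ)) with hG
  set R : ℕ → ℝ := fun k => Real.log (Stirling.stirlingSeq (k*(a+b)))
    - Real.log (Stirling.stirlingSeq (k*a)) - Real.log (Stirling.stirlingSeq (k*b)) with hR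
  set Φ : ℕ → ℝ := fun k => G k - (k:ℝ)*E + (1/2)*Real.log k with hΦ
  set L0 : ℝ := Real.log (Real.sqrt Real.pi) - Real.log (Real.sqrt Real.pi)
    - Real.log (Real.sqrt Real.pi) with hL0
  have hRlim : Tendsto R atTop (𝓝 L0) :=
    ((tendsto_log_stirling_mul _ (by omega)).sub (tendsto_log_stirling_mul _ ha)).sub
      (tendsto_log_stirling_mul _ hb)
  have hΦlim : Tendsto Φ atTop (𝓝 (L0 + c1)) := by
    apply Tendsto.congr' _ (hRlim.add_const c1)
    filter_upwards [eventually_ge_atTop 1] with k hk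
    have g := G_formula a b k ha hb hk
    simp only [hΦ, hG, hR, hc1]
    rw [g]; ring
  have hΦdiff : Tendsto (fun k => Φ (k+q) - Φ k) atTop (𝓝 0) := by
    have h := (hΦlim.comp (tendsto_add_atTop_nat q)).sub hΦlim
    simpa using h
  have hlog : Tendsto (fun k : ℕ => Real.log ((k:ℝ)+q) - Real.log k) atTop (𝓝 0) := by
    have hb2 : Tendsto (fun k : ℕ => 1 + (q:ℝ)/k) atTop (𝓝 1) := by
      have h := tendsto_const_div_atTop_nhds_zero_nat (q:ℝ)
      simpa using tendsto_const_nhds.add h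
    have hc : ContinuousAt Real.log 1 := Real.continuousAt_log one_ne_zero
    have h := hc.tendsto.comp hb2
    rw [Real.log_one] at h
    apply h.congr'
    filter_upwards [eventually_ge_atTop 1] with k hk
    have hk0 : (0:ℝ) < k := by exact_mod_cast hk
    have he : 1 + (q:ℝ)/k = ((k:ℝ)+q)/k := by field_simp
    simp only [Function.comp_apply]
    rw [he, Real.log_div (by positivity) hk0.ne']
  have hmain : Tendsto (fun k : ℕ => (q:ℝ)*E - (1/2)*(Real.log ((k:ℝ)+q) - Real.log k)
      + (Φ (k+q) - Φ k)) atTop (𝓝 ((q:ℝ)*E)) := by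
    have h := ((tendsto_const_nhds : Tendsto (fun _ : ℕ => (q:ℝ)*E) atTop (𝓝 ((q:ℝ)*E))).sub
      (hlog.const_mul (1/2:ℝ))).add hΦdiff
    simpa using h
  apply hmain.congr
  intro k
  simp only [hΦ, hG]
  push_cast
  ring

theorem dense_fract_log_binom (β : ℚ) (h0 : 0 < β) (h1 : β < 1)
    (hH : Irrational (binEnt (β : ℝ))) :
    Set.Icc (0 : ℝ) 1 ⊆
      closure {x : ℝ | ∃ n m : ℕ, 1 ≤ n ∧ (β : ℝ) * n = m ∧
        x = Int.fract (Real.logb 2 (n.choose m))} := by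
  classical
  set S := {x : ℝ | ∃ n m : ℕ, 1 ≤ n ∧ (β : ℝ) * n = m ∧
    x = Int.fract (Real.logb 2 (n.choose m))} with hS
  clear_value S
  obtain ⟨a, b, ha1, hb1, hβR⟩ : ∃ a b : ℕ, 1 ≤ a ∧ 1 ≤ b ∧
      (β:ℝ) = (a:ℝ) / ((a:ℝ)+(b:ℝ)) := by
    have hnum : 0 < β.num := Rat.num_pos.mpr h0
    have hd0 : 0 < β.den := β.den_pos
    have hβcast : (β:ℝ) = (β.num : ℝ) / (β.den : ℝ) := Rat.cast_def β
    have hlt : (β.num : ℝ) < (β.den : ℝ) := by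
      have h1R : (β:ℝ) < 1 := by exact_mod_cast h1
      rw [hβcast, div_lt_one (by exact_mod_cast hd0)] at h1R
      exact h1R
    have hnd : β.num < (β.den : ℤ) := by exact_mod_cast hlt
    refine ⟨β.num.toNat, β.den - β.num.toNat, by omega, by omega, ?_⟩
    rw [hβcast]
    have h2 : ((β.num.toNat : ℕ) : ℝ) = (β.num : ℝ) := by
      exact_mod_cast Int.toNat_of_nonneg hnum.le
    have h3 : ((β.num.toNat : ℕ) : ℝ) + ((β.den - β.num.toNat : ℕ) : ℝ) = (β.den : ℝ) := by
      have h4 : β.num.toNat + (β.den - β.num.toNat) = β.den := by omega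
      exact_mod_cast congrArg (Nat.cast : ℕ → ℝ) h4
    rw [← h2, ← h3]
  have hAB : (0:ℝ) < (a:ℝ)+b := by positivity
  set α : ℝ := ((a:ℝ)+b) * binEnt (β:ℝ) with hα
  clear_value α
  have hαirr : Irrational α := by
    have h := hH.natCast_mul (m := a+b) (by omega)
    have hcast : ((a+b : ℕ):ℝ) = (a:ℝ)+b := by push_cast; ring
    rw [hcast] at h
    rw [hα]
    exact h
  set F : ℕ → ℝ := fun k => Real.logb 2 (((k*(a+b)).choose (k*a) : ℕ)) with hF
  clear_value F
  have hlog2 : (0:ℝ) < Real.log 2 := Real.log_pos (by norm_num)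
  have hFdiff : ∀ q : ℕ, Tendsto (fun k => F (k+q) - F k) atTop (𝓝 ((q:ℝ) * α)) := by
    intro q
    have hG := tendsto_Gdiff a b ha1 hb1 q
    have h := hG.div_const (Real.log 2)
    have hE : (q:ℝ) * (((a:ℝ)+b) * Real.log ((a:ℝ)+b) - a*Real.log a - b*Real.log b)
        / Real.log 2 = (q:ℝ) * α := by
      rw [binEnt_formula (a:ℝ) (b:ℝ) (by positivity) (by positivity), hα, hβR]
      field_simp
    rw [hE] at h
    apply h.congr
    intro k
    simp only [hF, Real.logb]
    ring
  have hmain : Set.Ico (0:ℝ) 1 ⊆ closure S := by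
    intro s hs
    rw [Metric.mem_closure_iff]
    intro ε0 hε0
    obtain ⟨ε, hεpos, hεle0, hεle1⟩ : ∃ ε : ℝ, 0 < ε ∧ ε ≤ ε0 ∧ ε ≤ 1 - s :=
      ⟨min ε0 (1 - s), lt_min hε0 (by linarith [hs.2]), min_le_left _ _, min_le_right _ _⟩
    obtain ⟨q, p, hq1, hδpos, hδlt⟩ := exists_small_pos α hαirr (ε/2) (by positivity)
    set δ : ℝ := (q:ℝ)*α - p with hδ
    clear_value δ
    obtain ⟨N0, hN0⟩ := Metric.tendsto_atTop.mp (hFdiff q) (δ/2) (by linarith)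
    set k0 : ℕ := max N0 1 with hk0
    have hk0a : N0 ≤ k0 := by rw [hk0]; exact le_max_left _ _
    have hk0b : 1 ≤ k0 := by rw [hk0]; exact le_max_right _ _
    clear_value k0
    clear hk0
    set c : ℕ → ℝ := fun j => F (k0 + j*q) - j*(p:ℝ) with hc
    clear_value c
    have hstep : ∀ j, δ/2 ≤ c (j+1) - c j ∧ c (j+1) - c j ≤ 3*δ/2 := by
      intro j
      have hk : k0 + j*q ≥ N0 := by omega
      have h := hN0 (k0 + j*q) hk
      rw [Real.dist_eq] at h
      have habs := abs_lt.mp h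
      have hkey : c (j+1) - c j = (F ((k0+j*q)+q) - F (k0+j*q) - (q:ℝ)*α) + δ := by
        simp only [hc, hδ]
        rw [show k0 + (j+1)*q = (k0+j*q)+q from by ring]
        push_cast
        ring
      constructor <;> (rw [hkey]; linarith)
    have hstep' : ∀ j, δ/2 ≤ c (j+1) - c j ∧ c (j+1) - c j ≤ 3*δ/2 := hstep
    obtain ⟨j, hj1, hj2⟩ := crossing_aux c (δ/2) (3*δ/2) ((⌈c 0⌉:ℝ) + s)
      (by linarith) hstep' (by linarith [Int.le_ceil (c 0), hs.1])
    have h35 : 3*δ/2 < ε := by linarith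
    have hcj_lt : c j < (⌈c 0⌉:ℝ) + s + ε := by linarith
    have hfloor : ⌊c j⌋ = ⌈c 0⌉ := by
      rw [Int.floor_eq_iff]
      constructor
      · linarith [hs.1]
      · linarith
    have hfract : Int.fract (c j) = c j - (⌈c 0⌉:ℝ) := by
      rw [Int.fract, hfloor]
    have hfc : Int.fract (c j) = Int.fract (F (k0 + j*q)) := by
      simp only [hc]
      rw [show (j:ℝ)*(p:ℝ) = ((j*p : ℤ):ℝ) from by push_cast; ring, Int.fract_sub_intCast]
    refine ⟨Int.fract (F (k0 + j*q)), ?_, ?_⟩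
    · rw [hS]
      refine ⟨(k0 + j*q)*(a+b), (k0 + j*q)*a, ?_, ?_, ?_⟩
      · have h6 : 0 < (k0 + j*q)*(a+b) := Nat.mul_pos (by omega) (by omega)
        omega
      · rw [hβR]
        push_cast
        field_simp
      · simp only [hF]
    · rw [Real.dist_eq, ← hfc, hfract, abs_sub_comm, abs_of_nonneg (by linarith)]
      linarith
  calc Set.Icc (0:ℝ) 1 = closure (Set.Ico (0:ℝ) 1) := (closure_Ico (by norm_num)).symm
    _ ⊆ closure (closure S) := closure_mono hmain
    _ = closure S := closure_closure
end

section
/- For all natural numbers k ≥ 1 and a with 0 < a < 3^k, the binary entropy H(a/3^k) = −(a/3^k)·log₂(a/3^k) − (1 − a/3^k)·log₂(1 − a/3^k) is an irrational real number. -/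
theorem binEnt_irrational_of_pow_three_denom (k a : ℕ) (hk : 1 ≤ k)
    (ha0 : 0 < a) (ha1 : a < 3 ^ k) :
    Irrational (binEnt ((a : ℝ) / 3 ^ k)) := by
  rintro ⟨x, hx⟩
  set q : ℕ := 3 ^ k with hq
  have hq0 : 0 < q := Nat.pow_pos (by norm_num)
  set b : ℕ := q - a with hbdef
  have hb0 : 0 < b := by omega
  have hab : a + b = q := by omega
  have hbq : b < q := by omega
  have hA : (0:ℝ) < a := by exact_mod_cast ha0
  have hB : (0:ℝ) < b := by exact_mod_cast hb0
  have hQ : (0:ℝ) < q := by exact_mod_cast hq0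
  have hQcast : ((3:ℝ))^k = (q:ℝ) := by rw [hq]; push_cast; ring
  have hl2 : 0 < Real.log 2 := Real.log_pos (by norm_num)
  have habR : (a:ℝ) + b = q := by exact_mod_cast hab
  have haqR : (a:ℝ) < q := by exact_mod_cast (by omega : a < q)
  have hbqR : (b:ℝ) < q := by exact_mod_cast hbq
  have key : binEnt ((a:ℝ)/ (3:ℝ)^k) =
      ((q:ℝ)*Real.log q - a*Real.log a - b*Real.log b)/((q:ℝ)*Real.log 2) := by
    rw [hQcast]
    unfold binEnt
    have h1 : (1:ℝ) - a/q = b/q := by field_simp; linarith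
    rw [h1, Real.logb, Real.logb, Real.log_div (ne_of_gt hA) (ne_of_gt hQ),
      Real.log_div (ne_of_gt hB) (ne_of_gt hQ),
      show (q:ℝ)*Real.log q = a*Real.log q + b*Real.log q by rw [← habR]; ring]
    field_simp
    ring
  rw [key] at hx
  have hnum : (q:ℝ)*Real.log q - a*Real.log a - b*Real.log b = (x:ℝ) * ((q:ℝ)*Real.log 2) := by
    field_simp at hx
    linarith
  -- positivity of the numerator, hence of x
  have hla : (a:ℝ) * Real.log a < (a:ℝ) * Real.log q :=
    mul_lt_mul_of_pos_left (Real.log_lt_log hA haqR) hA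
  have hlb : (b:ℝ) * Real.log b < (b:ℝ) * Real.log q :=
    mul_lt_mul_of_pos_left (Real.log_lt_log hB hbqR) hB
  have hsum : (q:ℝ)*Real.log q = a*Real.log q + b*Real.log q := by rw [← habR]; ring
  have hNpos : 0 < (q:ℝ)*Real.log q - a*Real.log a - b*Real.log b := by linarith
  have hxpos : 0 < x := by
    have : 0 < (x:ℝ) := by
      have hden : 0 < (q:ℝ)*Real.log 2 := by positivity
      nlinarith [hnum]
    exact_mod_cast this
  set n : ℕ := x.num.toNat with hndef
  set d : ℕ := x.den with hddef
  have hd0 : 0 < d := x.pos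
  have hnn : (n : ℝ) = (x.num : ℝ) := by
    have : (n : ℤ) = x.num := Int.toNat_of_nonneg (le_of_lt (Rat.num_pos.mpr hxpos))
    exact_mod_cast this
  have hxd : (x:ℝ) * (d:ℝ) = (n:ℝ) := by
    rw [hnn, Rat.cast_def]
    field_simp
    rfl
  have E : (d:ℝ)*(q:ℝ)*Real.log q =
      (n:ℝ)*(q:ℝ)*Real.log 2 + (d:ℝ)*(a:ℝ)*Real.log a + (d:ℝ)*(b:ℝ)*Real.log b := by
    linear_combination (d:ℝ) * hnum + ((q:ℝ)*Real.log 2) * hxd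
  have hP1 : (0:ℝ) < ((q^(d*q) : ℕ) : ℝ) := by push_cast; positivity
  have hP2 : (0:ℝ) < ((2^(n*q) * a^(d*a) * b^(d*b) : ℕ) : ℝ) := by push_cast; positivity
  have l1 : Real.log ((q^(d*q) : ℕ) : ℝ) = Real.log ((2^(n*q) * a^(d*a) * b^(d*b) : ℕ) : ℝ) := by
    push_cast
    rw [Real.log_mul (by positivity) (by positivity), Real.log_mul (by positivity) (by positivity),
      Real.log_pow, Real.log_pow, Real.log_pow, Real.log_pow]
    push_cast
    linarith [E]
  have E2 : (q^(d*q) : ℕ) = 2^(n*q) * a^(d*a) * b^(d*b) := by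
    have : ((q^(d*q) : ℕ) : ℝ) = ((2^(n*q) * a^(d*a) * b^(d*b) : ℕ) : ℝ) := by
      rw [← Real.exp_log hP1, ← Real.exp_log hP2, l1]
    exact_mod_cast this
  -- take 3-adic valuations
  have h2ne : (2:ℕ)^(n*q) ≠ 0 := by positivity
  have hane : a^(d*a) ≠ 0 := by positivity
  have hbne : b^(d*b) ≠ 0 := by positivity
  have F := congrArg (fun m : ℕ => m.factorization 3) E2
  simp only [Nat.factorization_mul (mul_ne_zero h2ne hane) hbne,
    Nat.factorization_mul h2ne hane, Nat.factorization_pow, Finsupp.coe_add, Finsupp.coe_smul,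
    Pi.add_apply, Pi.smul_apply, smul_eq_mul] at F
  have hqf : q.factorization 3 = k := by
    rw [hq, Nat.Prime.factorization_pow Nat.prime_three, Finsupp.single_eq_same]
  have h2f : (2:ℕ).factorization 3 = 0 := by
    apply Nat.factorization_eq_zero_of_not_dvd
    norm_num
  rw [hqf, h2f] at F
  -- bound the valuations
  have hvlt : ∀ m : ℕ, 0 < m → m < q → m.factorization 3 < k := by
    intro m hm0 hmq
    by_contra h
    push_neg at h
    have hdvd : 3^k ∣ m := dvd_trans (pow_dvd_pow 3 h) (Nat.ordProj_dvd m 3)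
    have := Nat.le_of_dvd hm0 hdvd
    omega
  have hva : a.factorization 3 < k := hvlt a ha0 (by omega)
  have hvb : b.factorization 3 < k := hvlt b hb0 hbq
  have hbound : d*a*(a.factorization 3) + d*b*(b.factorization 3) ≤ d*q*(k-1) := by
    calc d*a*(a.factorization 3) + d*b*(b.factorization 3)
        ≤ d*a*(k-1) + d*b*(k-1) := by
          gcongr <;> omega
      _ = d*q*(k-1) := by rw [← hab]; ring
  simp only [mul_zero, zero_add, smul_eq_mul] at F
  have hF' : d*q*k ≤ d*q*(k-1) := by
    rw [F]
    exact hbound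
  have hdq : 0 < d*q := Nat.mul_pos hd0 hq0
  zify [hk] at hF'
  have hdqz : (0:ℤ) < (d:ℤ)*(q:ℤ) := by exact_mod_cast hdq
  nlinarith
end

section
/- For every α₀ ∈ (0,1], there exists a sequence (αₙ) of rational numbers with αₙ ∈ [0, α₀) for all n, αₙ → α₀ as n → ∞, and such that the binary entropy H(αₙ) is irrational for every n. -/
lemma irrational_logb_two (N : ℕ) (hN : 0 < N) (h3 : 3 ∣ N) : Irrational (Real.logb 2 N) := by
  rw [Irrational]
  rintro ⟨q, hq⟩
  have hN3 : 3 ≤ N := Nat.le_of_dvd hN h3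
  have hNR : (1:ℝ) < (N:ℝ) := by exact_mod_cast by omega
  have hqpos : 0 < q := by
    have : (0:ℝ) < Real.logb 2 N := Real.logb_pos (by norm_num) hNR
    rw [← hq] at this; exact_mod_cast this
  have h2 : (2:ℝ) ^ (Real.logb 2 (N:ℝ)) = N := Real.rpow_logb (by norm_num) (by norm_num) (by positivity)
  rw [← hq] at h2
  have hden : 0 < q.den := q.pos
  have hnumpos : 0 < q.num := Rat.num_pos.mpr hqpos
  have key : ((2:ℝ) ^ (q.num.toNat)) = (N:ℝ) ^ (q.den) := by
    have : ((2:ℝ) ^ ((q:ℝ)))^(q.den : ℕ) = (N:ℝ)^(q.den:ℕ) := by rw [h2]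
    rw [← Real.rpow_natCast ((2:ℝ) ^ ((q:ℝ))) q.den, ← Real.rpow_mul (by norm_num)] at this
    have hnum : (q:ℝ) * q.den = (q.num.toNat : ℝ) := by
      rw [Rat.cast_def]
      have : (q.den : ℝ) ≠ 0 := by positivity
      field_simp
      exact_mod_cast (Int.toNat_of_nonneg hnumpos.le).symm
    rw [hnum, Real.rpow_natCast] at this
    exact this
  have keyN : (2:ℕ) ^ q.num.toNat = N ^ q.den := by exact_mod_cast key
  have h3d : 3 ∣ N ^ q.den := dvd_pow h3 (by omega)
  rw [← keyN] at h3d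
  have := Nat.Prime.dvd_of_dvd_pow (p := 3) (by norm_num) h3d
  omega

lemma irr_binEnt (j k : ℕ) (h3 : 3 ∣ j) (hj : 0 < j) (hjk : j < 2^k) :
    Irrational (binEnt ((j:ℝ)/2^k)) := by
  set m : ℕ := 2^k - j with hm
  have hm1 : 1 ≤ m := by omega
  have hmk : (m:ℝ) = 2^k - j := by
    have : j ≤ 2^k := hjk.le
    push_cast [hm, this]; ring
  have h2k : (0:ℝ) < 2^k := by positivity
  have hjR : (0:ℝ) < j := by exact_mod_cast hj
  have hmR : (0:ℝ) < m := by exact_mod_cast hm1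
  have e1 : (1:ℝ) - (j:ℝ)/2^k = (m:ℝ)/2^k := by rw [hmk]; field_simp
  have lx : Real.logb 2 ((j:ℝ)/2^k) = Real.logb 2 j - k := by
    rw [Real.logb_div (by positivity) (by positivity)]
    congr 1
    rw [Real.logb_pow, Real.logb_self_eq_one (by norm_num)]
    ring
  have ly : Real.logb 2 ((m:ℝ)/2^k) = Real.logb 2 m - k := by
    rw [Real.logb_div (by positivity) (by positivity)]
    congr 1
    rw [Real.logb_pow, Real.logb_self_eq_one (by norm_num)]
    ring
  have lN : Real.logb 2 ((j^j * m^m : ℕ) : ℝ) = j * Real.logb 2 j + m * Real.logb 2 m := by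
    push_cast
    rw [Real.logb_mul (by positivity) (by positivity), Real.logb_pow, Real.logb_pow]
  have hbe : binEnt ((j:ℝ)/2^k) = (k:ℝ) - Real.logb 2 ((j^j * m^m : ℕ) : ℝ) / 2^k := by
    rw [binEnt, e1, lx, ly, lN]
    have hsum : (j:ℝ) + m = 2^k := by rw [hmk]; ring
    field_simp
    linear_combination (k:ℝ) * hsum
  rw [hbe]
  have hNpos : 0 < j^j * m^m := by positivity
  have hN3 : 3 ∣ j^j * m^m := Dvd.dvd.mul_right (dvd_pow h3 (by omega)) _
  have hI := irrational_logb_two _ hNpos hN3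
  have h := (hI.div_natCast (m := 2^k) (pow_ne_zero _ two_ne_zero)).natCast_sub k
  have hc : ((2^k : ℕ) : ℝ) = (2:ℝ)^k := by push_cast; ring
  rwa [hc] at h

theorem exists_rational_seq_binEnt_irrational (α₀ : ℝ) (h0 : 0 < α₀) (h1 : α₀ ≤ 1) :
    ∃ a : ℕ → ℚ,
      (∀ n, 0 ≤ (a n : ℝ) ∧ (a n : ℝ) < α₀) ∧
      Filter.Tendsto (fun n => (a n : ℝ)) Filter.atTop (nhds α₀) ∧
      (∀ n, Irrational (binEnt ((a n : ℝ)))) := by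
  obtain ⟨K, hK⟩ : ∃ K : ℕ, 3 < α₀ * 2^K := by
    obtain ⟨K, hK⟩ := pow_unbounded_of_one_lt (3/α₀) (by norm_num : (1:ℝ) < 2)
    refine ⟨K, ?_⟩
    rw [div_lt_iff₀ h0] at hK
    nlinarith
  have key : ∀ n : ℕ,
      (((((3 * (⌈α₀ * 2^(K+n) / 3⌉ - 1) : ℤ) : ℚ) / 2^(K+n) : ℚ) : ℝ)
        = ((3 * (⌈α₀ * 2^(K+n) / 3⌉ - 1) : ℤ) : ℝ) / 2^(K+n)) := by
    intro n; push_cast; ring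
  have hbig : ∀ n : ℕ, 3 < α₀ * 2^(K+n) := by
    intro n
    refine hK.trans_le ?_
    have : (2:ℝ)^K ≤ 2^(K+n) := pow_le_pow_right₀ (by norm_num) (by omega)
    nlinarith
  have hceil2 : ∀ n : ℕ, 2 ≤ ⌈α₀ * 2^(K+n) / 3⌉ := by
    intro n
    have : (1:ℝ) < α₀ * 2^(K+n) / 3 := by linarith [hbig n]
    have := Int.lt_ceil.mpr (by exact_mod_cast this : ((1:ℤ):ℝ) < α₀ * 2^(K+n) / 3)
    omega
  have hlt : ∀ n : ℕ, ((3 * (⌈α₀ * 2^(K+n) / 3⌉ - 1) : ℤ) : ℝ) < α₀ * 2^(K+n) := by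
    intro n
    have h := Int.ceil_lt_add_one (α₀ * 2^(K+n) / 3)
    push_cast
    nlinarith
  have hge : ∀ n : ℕ, α₀ * 2^(K+n) - 3 ≤ ((3 * (⌈α₀ * 2^(K+n) / 3⌉ - 1) : ℤ) : ℝ) := by
    intro n
    have h := Int.le_ceil (α₀ * 2^(K+n) / 3)
    push_cast
    nlinarith
  refine ⟨fun n => ((3 * (⌈α₀ * 2^(K+n) / 3⌉ - 1) : ℤ) : ℚ) / 2^(K+n), ?_, ?_, ?_⟩
  · intro n
    constructor
    · rw [key n]
      have hnn : (0:ℝ) ≤ ((3 * (⌈α₀ * 2^(K+n) / 3⌉ - 1) : ℤ) : ℝ) := by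
        have h2 : ((2:ℤ):ℝ) ≤ ((⌈α₀ * 2^(K+n) / 3⌉ : ℤ) : ℝ) := by exact_mod_cast hceil2 n
        push_cast at h2 ⊢; nlinarith
      positivity
    · rw [key n, div_lt_iff₀ (by positivity)]
      exact hlt n
  · have hlow : Filter.Tendsto (fun n : ℕ => α₀ - (3/2^K) * (1/2:ℝ)^n) Filter.atTop (nhds α₀) := by
      have h2 : Filter.Tendsto (fun n : ℕ => ((1:ℝ)/2)^n) Filter.atTop (nhds 0) :=
        tendsto_pow_atTop_nhds_zero_of_lt_one (by norm_num) (by norm_num)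
      have := (h2.const_mul (3/2^K)).const_sub α₀
      simpa using this
    refine tendsto_of_tendsto_of_tendsto_of_le_of_le hlow tendsto_const_nhds ?_ ?_
    · intro n
      dsimp only
      rw [key n]
      have hge' := hge n
      have h2k : (0:ℝ) < 2^(K+n) := by positivity
      rw [le_div_iff₀ h2k]
      have heq : (α₀ - 3/2^K * (1/2:ℝ)^n) * 2^(K+n) = α₀ * 2^(K+n) - 3 := by
        rw [pow_add]; field_simp
        rw [sub_mul, mul_assoc 3, ← mul_pow]; norm_num
      rw [heq]; exact hge'
    · intro n
      dsimp only
      rw [key n, div_le_iff₀ (by positivity)]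
      exact (hlt n).le
  · intro n
    set jz : ℤ := 3 * (⌈α₀ * 2^(K+n) / 3⌉ - 1) with hjz
    have hjz3 : (3:ℤ) ≤ jz := by have := hceil2 n; omega
    have hjznn : 0 ≤ jz := by omega
    have hcast : ((jz.toNat : ℕ) : ℝ) = (jz : ℝ) := by exact_mod_cast Int.toNat_of_nonneg hjznn
    have hjk : jz.toNat < 2^(K+n) := by
      have h1' : (jz:ℝ) < 2^(K+n) := by
        have h2 : α₀ * 2^(K+n) ≤ 2^(K+n) := by nlinarith [pow_pos (show (0:ℝ)<2 by norm_num) (K+n)]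
        linarith [hlt n]
      have : ((jz.toNat : ℕ):ℝ) < (((2^(K+n) : ℕ)):ℝ) := by rw [hcast]; push_cast; exact h1'
      exact_mod_cast this
    have h3d : 3 ∣ jz.toNat := by
      have : (3:ℤ) ∣ jz := ⟨_, rfl⟩
      omega
    have hjpos : 0 < jz.toNat := by omega
    have hirr := irr_binEnt jz.toNat (K+n) h3d hjpos hjk
    rw [key n, ← hcast]
    exact hirr
end
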